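/- arXiv:1110.1142 — 3 statements merged into one kernel-verified Lean document; each statement's English description precedes it below -/
import Mathlib

section
/- For q squarefree and k ∈ ℤ, Σ(q) = Σ_{a mod q, gcd(a,q)=1} e(-ak/q) Σ_{r mod q} e(-ar³/q) satisfies Σ(q) = q · Π_{p|q} (n_{k,p} - 1), where n_{k,p} is the number of r ∈ ℤ/pℤ with r³ + k ≡ 0 (mod p). In particular Σ(q) = 0 unless every prime divisor of q is ≡ 1 (mod 3). -/
/-!
Write `Σ(q) = ∑_{r mod q} c_q(k + r³)` with the Ramanujan sum `c_q(n) = ∑_{a ∈ (ℤ/qℤ)ˣ} e(an/q)`.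
For coprime `u, v` and a Bézout relation `au + bv = 1` one has `1/(uv) = b/u + a/v`, so the
standard additive character of `ℤ/uvℤ` is the product of those of `ℤ/uℤ` and `ℤ/vℤ` twisted by
the units `b` and `a`; as `c_q` is invariant under unit twists, the Chinese remainder theorem makes
`c_q`, and then `Σ`, multiplicative in `q`. At a prime, orthogonality gives
`c_p(n) = p·[p ∣ n] - 1`, hence `Σ(p) = p (n_{k,p} - 1)`. If `p ≢ 1 (mod 3)` then `3 ∤ p - 1`,
so cubing is a bijection of `ℤ/pℤ` and `n_{k,p} = 1`.
-/

open Finset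

/-- `e(w) = exp(2πiw)`. -/
noncomputable def eC (w : ℝ) : ℂ := Complex.exp (2 * Real.pi * Complex.I * w)

/-- `Σ(q) = Σ_{a mod q, gcd(a,q)=1} e(-ak/q) · Σ_{r mod q} e(-ar³/q)`. -/
noncomputable def SigmaSum (q : ℕ) (k : ℤ) : ℂ :=
  ∑ a ∈ (Finset.range q).filter (fun a => Nat.Coprime a q),
    eC (-((a : ℝ) * (k : ℝ)) / q) * ∑ r ∈ Finset.range q, eC (-((a : ℝ) * (r : ℝ) ^ 3) / q)

/-- the number of solutions `r ∈ ℤ/pℤ` to `r³ + k ≡ 0 (mod p)`. -/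
noncomputable def nSol (k : ℤ) (p : ℕ) : ℕ :=
  {r : ZMod p | r ^ 3 = -(k : ZMod p)}.ncard

open ZMod

lemma Fintype.sum_units_eq_sum_sub_zero {G₀ M : Type*} [GroupWithZero G₀] [Fintype G₀]
    [DecidableEq G₀] [AddCommGroup M] (f : G₀ → M) : ∑ a : G₀ˣ, f a = ∑ a, f a - f 0 := by
  rw [eq_sub_iff_add_eq, ← sum_erase_add univ f (mem_univ 0)]
  have : univ.map ⟨((↑) : G₀ˣ → G₀), Units.val_injective⟩ = univ.erase 0 := by
    ext a
    simp only [mem_map, mem_univ, true_and, mem_erase, and_true, Function.Embedding.coeFn_mk]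
    exact isUnit_iff_ne_zero
  rw [← this, sum_map]
  rfl

lemma Nat.multiplicative_eq_prod_primeFactors {M : Type*} [CommMonoid M] (f : ℕ → M)
    (h_mult : ∀ x y : ℕ, x.Coprime y → f (x * y) = f x * f y) (hf : f 1 = 1) {n : ℕ}
    (hn : Squarefree n) : f n = ∏ p ∈ n.primeFactors, f p := by
  rw [Nat.multiplicative_factorization f h_mult hf hn.ne_zero,
    Nat.prod_factorization_eq_prod_primeFactors]
  refine prod_congr rfl fun p hp => ?_
  rw [Nat.factorization_eq_one_of_squarefree hn (Nat.prime_of_mem_primeFactors hp)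
    (Nat.dvd_of_mem_primeFactors hp), pow_one]

lemma FiniteField.pow_injective_of_coprime {F : Type*} [Field F] [Fintype F] {n : ℕ} (hn : n ≠ 0)
    (h : n.Coprime (Fintype.card F - 1)) : Function.Injective fun x : F => x ^ n := by
  intro x y hxy
  simp only at hxy
  rcases eq_or_ne y 0 with rfl | hy
  · rwa [zero_pow hn, pow_eq_zero_iff hn] at hxy
  have h1 : (x / y) ^ n = 1 := by rw [div_pow, hxy, div_self (pow_ne_zero n hy)]
  have hxy0 : x / y ≠ 0 := by
    rintro h0
    rw [h0, zero_pow hn] at h1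
    exact zero_ne_one h1
  have h2 : orderOf (x / y) = 1 :=
    Nat.eq_one_of_dvd_coprimes h (orderOf_dvd_of_pow_eq_one h1)
      (orderOf_dvd_of_pow_eq_one (FiniteField.pow_card_sub_one_eq_one _ hxy0))
  rwa [orderOf_eq_one_iff, div_eq_one_iff_eq hy] at h2

noncomputable def ramanujanSum (q : ℕ) [NeZero q] (c : ZMod q) : ℂ :=
  ∑ a : (ZMod q)ˣ, stdAddChar ((a : ZMod q) * c)

lemma ramanujanSum_units_mul {q : ℕ} [NeZero q] (t : (ZMod q)ˣ) (c : ZMod q) :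
    ramanujanSum q (t * c) = ramanujanSum q c :=
  Fintype.sum_equiv (Equiv.mulRight t) _ _ fun a => by simp [mul_assoc]

lemma ramanujanSum_prime (p : ℕ) [Fact p.Prime] (c : ZMod p) :
    ramanujanSum p c = (if c = 0 then (p : ℂ) else 0) - 1 := by
  classical
  have h := AddChar.sum_mulShift c (isPrimitive_stdAddChar p)
  rw [ZMod.card] at h
  rw [ramanujanSum, Fintype.sum_units_eq_sum_sub_zero (fun a => stdAddChar (a * c)), h]
  simp [apply_ite]

lemma stdAddChar_eq_mul_of_bezout {u v : ℕ} [NeZero u] [NeZero v] (h : u.Coprime v) {a b : ℤ}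
    (hab : a * u + b * v = 1) (x : ZMod (u * v)) :
    stdAddChar x = stdAddChar ((b : ZMod u) * (chineseRemainder h x).1) *
      stdAddChar ((a : ZMod v) * (chineseRemainder h x).2) := by
  obtain ⟨n, rfl⟩ := ZMod.intCast_surjective x
  simp only [map_intCast, Prod.fst_intCast, Prod.snd_intCast, ← Int.cast_mul, stdAddChar_coe,
    ← Complex.exp_add]
  congr 1
  have hu : (u : ℂ) ≠ 0 := NeZero.ne _
  have hv : (v : ℂ) ≠ 0 := NeZero.ne _
  have hab' : (a * u + b * v : ℂ) = 1 := by exact_mod_cast hab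
  push_cast
  field_simp
  linear_combination -(n : ℂ) * hab'

lemma ramanujanSum_mul_of_coprime {u v : ℕ} [NeZero u] [NeZero v] (h : u.Coprime v)
    (x : ZMod (u * v)) :
    ramanujanSum (u * v) x =
      ramanujanSum u (chineseRemainder h x).1 * ramanujanSum v (chineseRemainder h x).2 := by
  set φ := chineseRemainder h
  obtain ⟨a, b, hab⟩ := Nat.isCoprime_iff_coprime.mpr h
  obtain ⟨tu, htu⟩ : IsUnit (b : ZMod u) :=
    .of_mul_eq_one (v : ZMod u) (by simpa [mul_comm] using congrArg (Int.cast : ℤ → ZMod u) hab)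
  obtain ⟨tv, htv⟩ : IsUnit (a : ZMod v) :=
    .of_mul_eq_one (u : ZMod v) (by simpa [mul_comm] using congrArg (Int.cast : ℤ → ZMod v) hab)
  let ε : (ZMod (u * v))ˣ ≃ (ZMod u)ˣ × (ZMod v)ˣ :=
    ((Units.mapEquiv φ.toMulEquiv).trans MulEquiv.prodUnits).toEquiv
  calc ramanujanSum (u * v) x
      = ∑ c, stdAddChar ((tu : ZMod u) * (((ε c).1 : ZMod u) * (φ x).1)) *
          stdAddChar ((tv : ZMod v) * (((ε c).2 : ZMod v) * (φ x).2)) := by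
        refine sum_congr rfl fun c _ => ?_
        rw [stdAddChar_eq_mul_of_bezout h hab, map_mul φ, htu, htv]
        rfl
    _ = ∑ c : (ZMod u)ˣ × (ZMod v)ˣ,
          stdAddChar ((c.1 : ZMod u) * ((tu : ZMod u) * (φ x).1)) *
            stdAddChar ((c.2 : ZMod v) * ((tv : ZMod v) * (φ x).2)) :=
        Fintype.sum_equiv ε _ _ fun c => by ring_nf
    _ = ramanujanSum u ((tu : ZMod u) * (φ x).1) * ramanujanSum v ((tv : ZMod v) * (φ x).2) := by
        rw [Fintype.sum_prod_type, ramanujanSum, ramanujanSum, sum_mul_sum]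
    _ = ramanujanSum u (φ x).1 * ramanujanSum v (φ x).2 := by
        rw [ramanujanSum_units_mul, ramanujanSum_units_mul]

lemma eC_intCast_div (q : ℕ) [NeZero q] (j : ℤ) : eC (j / q) = stdAddChar (j : ZMod q) := by
  rw [stdAddChar_coe, eC]
  push_cast
  ring_nf

lemma sum_range_eq_sum_zmod {M : Type*} [AddCommMonoid M] (q : ℕ) [NeZero q] (f : ZMod q → M) :
    ∑ i ∈ range q, f i = ∑ x, f x :=
  sum_nbij' (↑) ZMod.val (fun _ _ => mem_univ _) (fun x _ => mem_range.2 x.val_lt)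
    (fun _ hi => ZMod.val_cast_of_lt (mem_range.1 hi)) (fun x _ => natCast_zmod_val x)
    (fun _ _ => rfl)

lemma sum_range_coprime_eq_sum_units {M : Type*} [AddCommMonoid M] (q : ℕ) [NeZero q]
    (f : ZMod q → M) :
    ∑ a ∈ (range q).filter (·.Coprime q), f a = ∑ u : (ZMod q)ˣ, f u := by
  refine sum_bij' (fun a ha => unitOfCoprime a (mem_filter.1 ha).2) (fun u _ => (u : ZMod q).val)
    (fun _ _ => mem_univ _) (fun u _ => ?_) (fun a ha => ?_) (fun u _ => ?_) (fun _ _ => rfl)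
  · simp [ZMod.val_lt, ← ZMod.isUnit_iff_coprime]
  · simp [ZMod.val_cast_of_lt (mem_range.1 (mem_filter.1 ha).1)]
  · ext
    simp

lemma SigmaSum_eq_sum_ramanujanSum (q : ℕ) [NeZero q] (k : ℤ) :
    SigmaSum q k = ∑ r : ZMod q, ramanujanSum q ((k : ZMod q) + r ^ 3) := by
  have hterm (a r : ℕ) : eC (-((a : ℝ) * k) / q) * eC (-((a : ℝ) * (r : ℝ) ^ 3) / q) =
      stdAddChar (-((a : ZMod q) * ((k : ZMod q) + (r : ZMod q) ^ 3))) := by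
    rw [show -((a : ℝ) * k) = ((-(a * k) : ℤ) : ℝ) by push_cast; ring,
      show -((a : ℝ) * (r : ℝ) ^ 3) = ((-(a * r ^ 3) : ℤ) : ℝ) by push_cast; ring,
      eC_intCast_div, eC_intCast_div, ← AddChar.map_add_eq_mul]
    push_cast
    ring_nf
  calc SigmaSum q k
      = ∑ a ∈ (range q).filter (·.Coprime q),
          ∑ r : ZMod q, stdAddChar (-((a : ZMod q) * ((k : ZMod q) + r ^ 3))) := by
        refine sum_congr rfl fun a _ => ?_
        rw [mul_sum, ← sum_range_eq_sum_zmod]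
        exact sum_congr rfl fun r _ => hterm a r
    _ = ∑ u : (ZMod q)ˣ, ∑ r : ZMod q, stdAddChar (-((u : ZMod q) * ((k : ZMod q) + r ^ 3))) :=
        sum_range_coprime_eq_sum_units q fun x =>
          ∑ r : ZMod q, stdAddChar (-(x * ((k : ZMod q) + r ^ 3)))
    _ = ∑ r : ZMod q, ramanujanSum q ((k : ZMod q) + r ^ 3) := by
        rw [sum_comm]
        exact sum_congr rfl fun r _ => Fintype.sum_equiv (Equiv.neg _) _ _ fun u => by simp

lemma SigmaSum_one (k : ℤ) : SigmaSum 1 k = 1 := by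
  simp [SigmaSum, eC]

lemma SigmaSum_prime (p : ℕ) [Fact p.Prime] (k : ℤ) :
    SigmaSum p k = p * ((nSol k p : ℂ) - 1) := by
  classical
  have hcard : nSol k p = #{r : ZMod p | k + r ^ 3 = 0} := by
    rw [nSol, ← Set.ncard_coe_finset]
    congr 1
    ext r
    simp [add_eq_zero_iff_eq_neg']
  simp_rw [SigmaSum_eq_sum_ramanujanSum, ramanujanSum_prime, sum_sub_distrib]
  rw [← sum_filter, sum_const, sum_const, ← hcard, card_univ, ZMod.card, nsmul_eq_mul,
    nsmul_eq_mul]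
  ring

lemma SigmaSum_mul_of_coprime {u v : ℕ} (h : u.Coprime v) (k : ℤ) :
    SigmaSum (u * v) k = SigmaSum u k * SigmaSum v k := by
  rcases eq_or_ne u 0 with rfl | hu
  · simp [(Nat.coprime_zero_left _).1 h, SigmaSum_one]
  rcases eq_or_ne v 0 with rfl | hv
  · simp [(Nat.coprime_zero_right _).1 h, SigmaSum_one]
  have : NeZero u := ⟨hu⟩
  have : NeZero v := ⟨hv⟩
  set φ := chineseRemainder h
  simp_rw [SigmaSum_eq_sum_ramanujanSum, ramanujanSum_mul_of_coprime h, map_add, map_pow,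
    map_intCast, Prod.fst_add, Prod.snd_add, Prod.pow_fst, Prod.pow_snd, Prod.fst_intCast,
    Prod.snd_intCast]
  rw [sum_mul_sum, ← Fintype.sum_prod_type']
  exact Fintype.sum_equiv φ.toEquiv _ _ fun _ => rfl

lemma nSol_eq_one_of_mod_three_ne_one {p : ℕ} (hp : p.Prime) (h3 : p % 3 ≠ 1) (k : ℤ) :
    nSol k p = 1 := by
  have : Fact p.Prime := ⟨hp⟩
  have hcop : Nat.Coprime 3 (Fintype.card (ZMod p) - 1) := by
    rw [ZMod.card, Nat.Prime.coprime_iff_not_dvd Nat.prime_three]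
    have := hp.two_le
    omega
  have hinj := FiniteField.pow_injective_of_coprime three_ne_zero hcop
  obtain ⟨r, hr⟩ := Finite.injective_iff_surjective.1 hinj (-(k : ZMod p))
  rw [nSol, Set.ncard_eq_one]
  exact ⟨r, Set.ext fun s => ⟨fun hs => hinj (hs.trans hr.symm), fun hs => hs ▸ hr⟩⟩

lemma SigmaSum_eq_of_squarefree {q : ℕ} (hq : Squarefree q) (k : ℤ) :
    SigmaSum q k = (q : ℂ) * ∏ p ∈ q.primeFactors, ((nSol k p : ℂ) - 1) := by
  rw [Nat.multiplicative_eq_prod_primeFactors (SigmaSum · k)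
    (fun _ _ h => SigmaSum_mul_of_coprime h k) (SigmaSum_one k) hq]
  calc ∏ p ∈ q.primeFactors, SigmaSum p k
      = ∏ p ∈ q.primeFactors, (p : ℂ) * ((nSol k p : ℂ) - 1) :=
        prod_congr rfl fun p hp =>
          have : Fact p.Prime := ⟨Nat.prime_of_mem_primeFactors hp⟩
          SigmaSum_prime p k
    _ = (q : ℂ) * ∏ p ∈ q.primeFactors, ((nSol k p : ℂ) - 1) := by
        rw [prod_mul_distrib, ← Nat.cast_prod, Nat.prod_primeFactors_of_squarefree hq]

theorem SigmaSum_squarefree_eval (q : ℕ) (hq : Squarefree q) (k : ℤ) :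
    SigmaSum q k = (q : ℂ) * ∏ p ∈ q.primeFactors, ((nSol k p : ℂ) - 1) ∧
    ((¬ ∀ p ∈ q.primeFactors, p % 3 = 1) → SigmaSum q k = 0) := by
  refine ⟨SigmaSum_eq_of_squarefree hq k, fun hnot => ?_⟩
  obtain ⟨p, hp, hp3⟩ := not_forall₂.1 hnot
  have hnSol : nSol k p = 1 :=
    nSol_eq_one_of_mod_three_ne_one (Nat.prime_of_mem_primeFactors hp) hp3 k
  rw [SigmaSum_eq_of_squarefree hq k, prod_eq_zero hp (by rw [hnSol, Nat.cast_one, sub_self]),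
    mul_zero]
end

section
/- (Pólya–Vinogradov with explicit constant) For any non-principal Dirichlet character χ modulo q and any integers M and N ≥ 1, |Σ_{M < n ≤ M+N} χ(n)| ≤ 6 √q log q. -/
/-!
A primitive character `χ` mod `f` is proportional to its own discrete Fourier transform, with
the Gauss sum `τ(χ)`, of absolute value `√f`, as constant. Summed over an interval, each additive
character `e(j · / f)` becomes a geometric sum of size at most `1 / sin (π j / f)`, and
`∑_{0 < j < f} 1 / sin (π j / f) ≤ f (1 + log f)`; hence interval sums of `χ` are at most
`√f (1 + log f)`. A non-principal `χ` mod `q` is induced by a primitive `χ'` of conductor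
`f > 1`, and `χ n = χ' n ∑_{d ∣ (n, q)} μ d`. Exchanging the sums, only divisors `d` coprime to
`f`, i.e. divisors of `q / f`, contribute, and there are at most `2 √(q / f)` of them, so the
sum is at most `2 √q (1 + log f) ≤ 6 √q log q`.
-/

open Finset Real ZMod
open scoped ArithmeticFunction.Moebius

theorem sub_one_mul_sum_zpow_Ioc {K : Type*} [Field K] {z : K} (hz : z ≠ 0) {A B : ℤ}
    (hAB : A ≤ B) : (z - 1) * ∑ n ∈ Ioc A B, z ^ n = z ^ (B + 1) - z ^ (A + 1) := by
  induction B, hAB using Int.leInduction with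
  | base => simp
  | succ B hAB ih =>
    rw [← Order.succ_eq_add_one, ← insert_Ioc_right_eq_Ioc_succ hAB, sum_insert (by simp),
      mul_add, ih, Order.succ_eq_add_one, zpow_add_one₀ hz (B + 1)]
    ring

theorem norm_sum_zpow_Ioc_le {K : Type*} [NormedField K] {z : K} (hz : ‖z‖ = 1) (hz1 : z ≠ 1)
    (A B : ℤ) : ‖∑ n ∈ Ioc A B, z ^ n‖ ≤ 2 / ‖z - 1‖ := by
  rcases lt_or_ge B A with hBA | hAB
  · simp only [Ioc_eq_empty_of_le hBA.le, sum_empty, norm_zero]; positivity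
  have hz0 : z ≠ 0 := by rintro rfl; simp at hz
  have hz1' : 0 < ‖z - 1‖ := norm_pos_iff.2 (sub_ne_zero.2 hz1)
  rw [le_div_iff₀ hz1', mul_comm, ← norm_mul, sub_one_mul_sum_zpow_Ioc hz0 hAB]
  calc ‖z ^ (B + 1) - z ^ (A + 1)‖ ≤ ‖z ^ (B + 1)‖ + ‖z ^ (A + 1)‖ := norm_sub_le _ _
    _ = 2 := by rw [norm_zpow, norm_zpow, hz, one_zpow, one_zpow]; norm_num

theorem two_mul_mul_one_sub_le_sin_pi_mul {t : ℝ} (h₀ : 0 ≤ t) (h₁ : t ≤ 1) :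
    2 * t * (1 - t) ≤ sin (π * t) := by
  wlog ht : t ≤ 1 / 2 generalizing t
  · have := this (t := 1 - t) (by linarith) (by linarith) (by linarith)
    rw [show π * (1 - t) = π - π * t by ring, sin_pi_sub] at this
    linarith
  have := mul_le_sin (x := π * t) (by positivity) (by nlinarith [pi_pos])
  rw [← mul_assoc, div_mul_cancel₀ _ pi_ne_zero] at this
  nlinarith

theorem inv_sin_pi_mul_le {t : ℝ} (h₀ : 0 < t) (h₁ : t < 1) :
    (sin (π * t))⁻¹ ≤ (2 * t)⁻¹ + (2 * (1 - t))⁻¹ := by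
  have h₂ : 0 < 1 - t := by linarith
  calc (sin (π * t))⁻¹ ≤ (2 * t * (1 - t))⁻¹ :=
        inv_anti₀ (by positivity) (two_mul_mul_one_sub_le_sin_pi_mul h₀.le h₁.le)
    _ = (2 * t)⁻¹ + (2 * (1 - t))⁻¹ := by field_simp; ring

theorem sum_Ico_inv_le_one_add_log (N : ℕ) : ∑ m ∈ Ico 1 N, (m : ℝ)⁻¹ ≤ 1 + log N := by
  calc ∑ m ∈ Ico 1 N, (m : ℝ)⁻¹ ≤ ∑ m ∈ Icc 1 N, (m : ℝ)⁻¹ :=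
        sum_le_sum_of_subset_of_nonneg Ico_subset_Icc_self fun _ _ _ ↦ by positivity
    _ = harmonic N := by simp [harmonic_eq_sum_Icc]
    _ ≤ 1 + log N := harmonic_le_one_add_log N

theorem sum_Ico_inv_sin_pi_mul_div_le (N : ℕ) :
    ∑ m ∈ Ico 1 N, (sin (π * m / N))⁻¹ ≤ N * (1 + log N) := by
  have reflect : ∑ m ∈ Ico 1 N, ((N : ℝ) - m)⁻¹ = ∑ m ∈ Ico 1 N, (m : ℝ)⁻¹ := by
    have := sum_Ico_reflect (fun m ↦ (m : ℝ)⁻¹) 1 (Nat.le_succ N)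
    rw [Nat.add_sub_cancel_left, Nat.add_sub_cancel] at this
    rw [← this]
    refine sum_congr rfl fun m hm ↦ ?_
    rw [Nat.cast_sub (mem_Ico.1 hm).2.le]
  calc ∑ m ∈ Ico 1 N, (sin (π * m / N))⁻¹
      ≤ ∑ m ∈ Ico 1 N, (N / 2 * (m : ℝ)⁻¹ + N / 2 * ((N : ℝ) - m)⁻¹) := by
        refine sum_le_sum fun m hm ↦ ?_
        obtain ⟨h₁, h₂⟩ := mem_Ico.1 hm
        have hm : (0 : ℝ) < m := by exact_mod_cast h₁
        have hmN : (m : ℝ) < N := by exact_mod_cast h₂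
        have hN : (0 : ℝ) < N := hm.trans hmN
        have := inv_sin_pi_mul_le (t := m / N) (by positivity) ((div_lt_one hN).2 hmN)
        calc (sin (π * m / N))⁻¹ = (sin (π * (m / N)))⁻¹ := by rw [mul_div_assoc]
          _ ≤ (2 * ((m : ℝ) / N))⁻¹ + (2 * (1 - (m : ℝ) / N))⁻¹ := this
          _ = N / 2 * (m : ℝ)⁻¹ + N / 2 * ((N : ℝ) - m)⁻¹ := by
            have : (N : ℝ) - m ≠ 0 := by linarith
            field_simp
    _ = N * ∑ m ∈ Ico 1 N, (m : ℝ)⁻¹ := by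
        rw [sum_add_distrib, ← mul_sum, ← mul_sum, reflect]; ring
    _ ≤ N * (1 + log N) := by gcongr; exact sum_Ico_inv_le_one_add_log N

namespace ZMod

variable {N : ℕ} [NeZero N]

theorem sum_univ_val_eq_sum_range {M : Type*} [AddCommMonoid M] (g : ℕ → M) :
    ∑ j : ZMod N, g j.val = ∑ m ∈ range N, g m := by
  obtain ⟨n, rfl⟩ := Nat.exists_eq_succ_of_ne_zero (NeZero.ne N)
  exact Fin.sum_univ_eq_sum_range g _

theorem norm_stdAddChar (j : ZMod N) : ‖stdAddChar j‖ = 1 := by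
  rw [stdAddChar_apply]; exact Circle.norm_coe _

theorem norm_stdAddChar_sub_one (j : ZMod N) :
    ‖stdAddChar j - 1‖ = 2 * sin (π * j.val / N) := by
  have h : π * j.val / N = 2 * π * (j.val / N) / 2 := by ring
  rw [stdAddChar_apply, toCircle_eq_circleExp, Circle.coe_exp, mul_comm,
    Complex.norm_exp_I_mul_ofReal_sub_one, ← h, norm_mul, Real.norm_two, Real.norm_of_nonneg]
  apply sin_nonneg_of_nonneg_of_le_pi (by positivity)
  rw [mul_div_assoc]
  exact mul_le_of_le_one_right pi_pos.le
    (div_le_one_of_le₀ (by exact_mod_cast (val_lt j).le) (Nat.cast_nonneg _))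

theorem norm_sum_stdAddChar_zpow_Ioc_le {j : ZMod N} (hj : j ≠ 0) (A B : ℤ) :
    ‖∑ n ∈ Ioc A B, stdAddChar j ^ n‖ ≤ (sin (π * j.val / N))⁻¹ := by
  have hj1 : stdAddChar j ≠ 1 := by
    rwa [← AddChar.map_zero_eq_one (stdAddChar : AddChar (ZMod N) ℂ), injective_stdAddChar.ne_iff]
  have := norm_sum_zpow_Ioc_le (norm_stdAddChar j) hj1 A B
  rwa [norm_stdAddChar_sub_one, div_mul_cancel_left₀ two_ne_zero] at this

end ZMod

namespace DirichletCharacter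

variable {N : ℕ} {χ : DirichletCharacter ℂ N}

theorem IsPrimitive.norm_gaussSum_stdAddChar [NeZero N] (hχ : χ.IsPrimitive) :
    ‖gaussSum χ stdAddChar‖ = √N := by
  have h := congrFun (dft_dft (⇑χ)) (-1)
  simp only [neg_neg, map_one, smul_eq_mul, mul_one, dft_apply,
    hχ.fourierTransform_eq_inv_mul_gaussSum, mul_neg_one, neg_neg] at h
  have hτ : star (gaussSum χ stdAddChar) * gaussSum χ stdAddChar = N := by
    rw [← h, star_gaussSum_eq, gaussSum, sum_mul]
    refine Fintype.sum_equiv (Equiv.neg _) _ _ fun a ↦ ?_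
    simp only [Equiv.neg_apply, neg_neg, AddChar.inv_apply, mul_comm, mul_left_comm]
  rw [← starRingEnd_apply, Complex.conj_mul'] at hτ
  have hτ' : ‖gaussSum χ stdAddChar‖ ^ 2 = N := by exact_mod_cast hτ
  rw [← hτ', Real.sqrt_sq (norm_nonneg _)]

theorem IsPrimitive.sum_Ioc_eq [NeZero N] (hχ : χ.IsPrimitive) (A B : ℤ) :
    ∑ n ∈ Ioc A B, χ n =
      (N : ℂ)⁻¹ * gaussSum χ stdAddChar * ∑ j, χ⁻¹ (-j) * ∑ n ∈ Ioc A B, stdAddChar j ^ n := by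
  have expand (x : ZMod N) :
      χ x = (N : ℂ)⁻¹ * gaussSum χ stdAddChar * ∑ j, χ⁻¹ (-j) * stdAddChar (j * x) := by
    conv_lhs => rw [← dft.symm_apply_apply (⇑χ)]
    simp only [invDFT_apply, hχ.fourierTransform_eq_inv_mul_gaussSum, smul_eq_mul, mul_sum,
      mul_assoc]
    refine sum_congr rfl fun j _ ↦ by ring
  simp only [expand, ← mul_sum, mul_comm (_ : ZMod N) (Int.cast _), ← zsmul_eq_mul,
    AddChar.map_zsmul_eq_zpow]
  rw [sum_comm]
  simp only [mul_sum]

theorem IsPrimitive.norm_sum_Ioc_le (hN : 1 < N) (hχ : χ.IsPrimitive) (A B : ℤ) :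
    ‖∑ n ∈ Ioc A B, χ n‖ ≤ √N * (1 + log N) := by
  have : NeZero N := ⟨by omega⟩
  have : Nontrivial (ZMod N) := ZMod.nontrivial_iff.2 hN.ne'
  have hterm (j : ZMod N) :
      ‖χ⁻¹ (-j) * ∑ n ∈ Ioc A B, stdAddChar j ^ n‖ ≤ (sin (π * j.val / N))⁻¹ := by
    -- for `j = 0` both sides vanish: `χ⁻¹ 0 = 0` since `N ≠ 1`, and `(sin 0)⁻¹ = 0`
    rcases eq_or_ne j 0 with rfl | hj
    · simp [MulChar.map_zero]
    rw [norm_mul]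
    exact (mul_le_of_le_one_left (norm_nonneg _) (norm_le_one _ _)).trans
      (norm_sum_stdAddChar_zpow_Ioc_le hj A B)
  have hsum : ∑ j : ZMod N, (sin (π * j.val / N))⁻¹ = ∑ m ∈ Ico 1 N, (sin (π * m / N))⁻¹ := by
    rw [sum_univ_val_eq_sum_range (fun m ↦ (sin (π * m / N))⁻¹), range_eq_Ico,
      sum_eq_sum_Ico_succ_bot (by omega)]
    simp
  rw [hχ.sum_Ioc_eq]
  calc ‖(N : ℂ)⁻¹ * gaussSum χ stdAddChar * ∑ j, χ⁻¹ (-j) * ∑ n ∈ Ioc A B, stdAddChar j ^ n‖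
      ≤ (N : ℝ)⁻¹ * √N * ∑ j : ZMod N, (sin (π * j.val / N))⁻¹ := by
        rw [norm_mul, norm_mul, norm_inv, Complex.norm_natCast, hχ.norm_gaussSum_stdAddChar]
        gcongr
        exact (norm_sum_le _ _).trans (sum_le_sum fun j _ ↦ hterm j)
    _ ≤ (N : ℝ)⁻¹ * √N * (N * (1 + log N)) := by
        rw [hsum]; gcongr; exact sum_Ico_inv_sin_pi_mul_div_le N
    _ = √N * (1 + log N) := by field_simp

end DirichletCharacter

theorem ArithmeticFunction.sum_divisors_moebius {R : Type*} [Ring R] (n : ℕ) :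
    ∑ d ∈ n.divisors, (μ d : R) = if n = 1 then 1 else 0 := by
  simp_rw [← intCoe_apply]
  rw [← coe_mul_zeta_apply, coe_moebius_mul_coe_zeta, one_apply]

theorem Nat.card_divisors_le_two_mul_sqrt (n : ℕ) : (#n.divisors : ℝ) ≤ 2 * √n := by
  set S := {d ∈ Icc 1 n.sqrt | d ∣ n}
  have hcover : n.divisors ⊆ S ∪ S.image (n / ·) := by
    intro d hd
    obtain ⟨hdn, hn⟩ := Nat.mem_divisors.1 hd
    have hd0 : 0 < d := Nat.pos_of_mem_divisors hd
    rcases le_total (d * d) n with h | h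
    · exact mem_union_left _ (mem_filter.2 ⟨mem_Icc.2 ⟨hd0, Nat.le_sqrt.2 h⟩, hdn⟩)
    have hle : n / d * (n / d) ≤ n :=
      calc n / d * (n / d) ≤ n / d * d := Nat.mul_le_mul_left _ (Nat.div_le_of_le_mul h)
        _ = n := Nat.div_mul_cancel hdn
    have hpos : 0 < n / d := Nat.div_pos (Nat.le_of_dvd (Nat.pos_of_ne_zero hn) hdn) hd0
    exact mem_union_right _ (mem_image.2 ⟨n / d,
      mem_filter.2 ⟨mem_Icc.2 ⟨hpos, Nat.le_sqrt.2 hle⟩, Nat.div_dvd_of_dvd hdn⟩,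
      Nat.div_div_self hdn hn⟩)
  have hS : #S ≤ n.sqrt := (card_filter_le _ _).trans (by simp)
  have : #n.divisors ≤ 2 * n.sqrt :=
    calc #n.divisors ≤ #S + #(S.image (n / ·)) := (card_le_card hcover).trans (card_union_le _ _)
      _ ≤ n.sqrt + n.sqrt := add_le_add hS (Finset.card_image_le.trans hS)
      _ = 2 * n.sqrt := (two_mul _).symm
  calc (#n.divisors : ℝ) ≤ 2 * n.sqrt := by exact_mod_cast this
    _ ≤ 2 * √n := by gcongr; exact Real.nat_sqrt_le_real_sqrt

namespace DirichletCharacter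

variable {q : ℕ}

theorem sum_norm_apply_divisors_le {f : ℕ} (hfq : f ∣ q) (ψ : DirichletCharacter ℂ f) :
    ∑ d ∈ q.divisors, ‖ψ d‖ ≤ #(q / f).divisors := by
  calc ∑ d ∈ q.divisors, ‖ψ d‖ ≤ ∑ d ∈ q.divisors, if d.Coprime f then 1 else 0 := by
        refine sum_le_sum fun d _ ↦ ?_
        split_ifs with h
        · exact norm_le_one _ _
        · rw [MulChar.map_nonunit _ (mt (ZMod.isUnit_iff_coprime d f).1 h), norm_zero]
    _ = #{d ∈ q.divisors | d.Coprime f} := by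
        rw [sum_ite, sum_const_zero, add_zero, sum_const, nsmul_one]
    _ ≤ #(q / f).divisors := by
        gcongr
        intro d hd
        simp only [mem_filter, Nat.mem_divisors] at hd ⊢
        obtain ⟨⟨hdq, hq⟩, hdf⟩ := hd
        exact ⟨Nat.dvd_div_of_mul_dvd (hdf.symm.mul_dvd_of_dvd_of_dvd hfq hdq),
          (Nat.div_ne_zero_iff_of_dvd hfq).2 ⟨hq, ne_zero_of_dvd_ne_zero hq hfq⟩⟩

theorem apply_eq_sum_moebius_mul_primitiveCharacter [NeZero q] (χ : DirichletCharacter ℂ q)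
    (n : ℤ) : χ n = ∑ d ∈ q.divisors with ↑d ∣ n, μ d * χ.primitiveCharacter n := by
  have hdiv : {d ∈ q.divisors | ↑d ∣ n} = (n.gcd q).divisors := by
    ext d
    simp only [Int.natCast_dvd, mem_filter, Nat.mem_divisors, Int.gcd, Int.natAbs_natCast,
      Nat.dvd_gcd_iff, Nat.gcd_eq_zero_iff, Int.natAbs_eq_zero, NeZero.ne q, ne_eq,
      not_false_eq_true, and_true, and_false]
    exact and_comm
  rw [← sum_mul, hdiv, ArithmeticFunction.sum_divisors_moebius]
  split_ifs with h
  · rw [one_mul, primitiveCharacter_apply_of_isCoprime _ (Int.isCoprime_iff_gcd_eq_one.2 h)]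
  · rw [zero_mul, MulChar.map_nonunit]
    rwa [coe_int_isUnit_iff_isCoprime, isCoprime_comm, Int.isCoprime_iff_gcd_eq_one]

theorem sum_Ioc_eq_sum_divisors [NeZero q] (χ : DirichletCharacter ℂ q) (A B : ℤ) :
    ∑ n ∈ Ioc A B, χ n = ∑ d ∈ q.divisors,
      μ d * χ.primitiveCharacter d * ∑ m ∈ Ioc (A / d) (B / d), χ.primitiveCharacter m := by
  simp_rw [χ.apply_eq_sum_moebius_mul_primitiveCharacter, sum_filter]
  rw [sum_comm]
  refine sum_congr rfl fun d hd ↦ ?_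
  have hd0 : (0 : ℤ) < d := by exact_mod_cast Nat.pos_of_mem_divisors hd
  rw [← sum_filter, Int.Ioc_filter_dvd_eq _ _ hd0, sum_map]
  simp only [Int.cast_natCast, Rat.floor_intCast_div_natCast, Function.Embedding.coeFn_mk,
    Int.cast_mul, map_mul, mul_sum]
  exact sum_congr rfl fun m _ ↦ by ring

theorem norm_sum_Ioc_le [NeZero q] {χ : DirichletCharacter ℂ q} (hχ : χ ≠ 1) (A B : ℤ) :
    ‖∑ n ∈ Ioc A B, χ n‖ ≤ 2 * √q * (1 + log χ.conductor) := by
  set f := χ.conductor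
  set χ' := χ.primitiveCharacter
  have hf : 1 < f := by
    have := χ.conductor_ne_zero
    have := mt χ.eq_one_iff_conductor_eq_one.2 hχ
    omega
  have hfq : f ∣ q := χ.conductor_dvd_level
  rw [χ.sum_Ioc_eq_sum_divisors]
  calc ‖∑ d ∈ q.divisors, μ d * χ' d * ∑ m ∈ Ioc (A / d) (B / d), χ' m‖
      ≤ ∑ d ∈ q.divisors, ‖χ' d‖ * (√f * (1 + log f)) := by
        refine (norm_sum_le _ _).trans (sum_le_sum fun d _ ↦ ?_)
        rw [norm_mul, norm_mul, Complex.norm_intCast]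
        have hμ : |(μ d : ℝ)| ≤ 1 := by exact_mod_cast ArithmeticFunction.abs_moebius_le_one
        have hS := IsPrimitive.norm_sum_Ioc_le hf χ.primitiveCharacter_isPrimitive (A / d) (B / d)
        calc |(μ d : ℝ)| * ‖χ' d‖ * ‖∑ m ∈ Ioc (A / d) (B / d), χ' m‖
            ≤ 1 * ‖χ' d‖ * (√f * (1 + log f)) := by gcongr
          _ = ‖χ' d‖ * (√f * (1 + log f)) := by rw [one_mul]
    _ ≤ #(q / f).divisors * (√f * (1 + log f)) := by
        rw [← sum_mul]
        exact mul_le_mul_of_nonneg_right (sum_norm_apply_divisors_le hfq χ') (by positivity)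
    _ ≤ 2 * √(q / f : ℕ) * (√f * (1 + log f)) :=
        mul_le_mul_of_nonneg_right (Nat.card_divisors_le_two_mul_sqrt _) (by positivity)
    _ = 2 * √q * (1 + log f) := by
        have hf0 : (f : ℝ) ≠ 0 := by positivity
        rw [Nat.cast_div hfq hf0, ← mul_assoc, mul_assoc 2, ← Real.sqrt_mul (by positivity),
          div_mul_cancel₀ _ hf0]

end DirichletCharacter

theorem polya_vinogradov_general (q : ℕ) (hq : 2 ≤ q) (χ : DirichletCharacter ℂ q)
    (hχ : χ ≠ 1) (M : ℤ) (N : ℕ) :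
    ‖∑ n ∈ Finset.Ioc M (M + N), χ (n : ZMod q)‖
      ≤ 6 * Real.sqrt q * Real.log q := by
  have : NeZero q := ⟨by omega⟩
  have hlog : 1 ≤ 2 * log q := by
    have := log_le_log (by norm_num) (by exact_mod_cast hq : (2 : ℝ) ≤ q)
    linarith [log_two_gt_d9]
  have hf : log χ.conductor ≤ log q :=
    log_le_log (by exact_mod_cast Nat.pos_of_ne_zero χ.conductor_ne_zero)
      (by exact_mod_cast Nat.le_of_dvd (by omega) χ.conductor_dvd_level)
  calc ‖∑ n ∈ Ioc M (M + N), χ n‖ ≤ 2 * √q * (1 + log χ.conductor) :=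
        DirichletCharacter.norm_sum_Ioc_le hχ M (M + N)
    _ ≤ 2 * √q * (3 * log q) := by gcongr; linarith
    _ = 6 * √q * log q := by ring

theorem polya_vinogradov (q : ℕ) (hq : 2 ≤ q) (χ : DirichletCharacter ℂ q)
    (hχ : χ ≠ 1) (M : ℤ) (N : ℕ) (hN : 1 ≤ N) :
    ‖∑ n ∈ Finset.Ioc M (M + N), χ (n : ZMod q)‖
      ≤ 6 * Real.sqrt q * Real.log q :=
  polya_vinogradov_general q hq χ hχ M N
end

section
/- (Divisor-counting bound for the minor arcs) Let q ≥ 1 and x ≥ 2. Then the number of pairs (r₁, r₂) with -x < r₁, r₂ < x, r₁ r₂ ≠ 0, and q | r₁ r₂ is ≪ d(q) · x²/q + d(q) · x, where d(q) is the number of divisors of q. -/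
open Finset

/-!
A pair with `q ∣ r₁ r₂` splits `q = d e` with `d ∣ r₁` and `e ∣ r₂`, so the pairs are covered
by the `d(q)` boxes of multiples of `d` times multiples of `e`. An interval of length `2x` holds
at most `2x/d + 1` multiples of `d`, and `(2x/d + 1)(2x/e + 1) ≤ 4x²/q + 5x` once `x ≥ 1`.
-/

lemma mem_Ioo_floor_neg_ceil_iff {x : ℝ} {r : ℤ} : r ∈ Ioo ⌊-x⌋ ⌈x⌉ ↔ |(r : ℝ)| < x := by
  rw [mem_Ioo, Int.floor_lt, Int.lt_ceil, abs_lt]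

lemma card_filter_dvd_Ioo_floor_neg_ceil_le {m : ℤ} (hm : 0 < m) {x : ℝ} (hx : 0 ≤ x) :
    (#{r ∈ Ioo ⌊-x⌋ ⌈x⌉ | m ∣ r} : ℝ) ≤ 2 * x / m + 1 := by
  have hm' : (0 : ℝ) < m := by exact_mod_cast hm
  set K := ⌊x / m⌋
  have hK : 0 ≤ K := Int.floor_nonneg.mpr (by positivity)
  have hsub : {r ∈ Ioo ⌊-x⌋ ⌈x⌉ | m ∣ r} ⊆ (Icc (-K) K).image (m * ·) := by
    intro r hr
    obtain ⟨hr, k, rfl⟩ := mem_filter.mp hr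
    rw [mem_Ioo_floor_neg_ceil_iff] at hr
    have hk : |(k : ℝ)| ≤ x / m := by
      rw [le_div_iff₀ hm']
      push_cast at hr
      rw [abs_mul, abs_of_pos hm'] at hr
      linarith
    refine mem_image.mpr ⟨k, mem_Icc.mpr ⟨?_, ?_⟩, rfl⟩
    · rw [neg_le]; exact Int.le_floor.mpr (by push_cast; linarith [neg_abs_le (k : ℝ)])
    · exact Int.le_floor.mpr (by linarith [le_abs_self (k : ℝ)])
  calc (#{r ∈ Ioo ⌊-x⌋ ⌈x⌉ | m ∣ r} : ℝ)
      ≤ #(Icc (-K) K) := by exact_mod_cast (card_le_card hsub).trans card_image_le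
    _ = 2 * K + 1 := by
        rw [Int.card_Icc, show K + 1 - -K = 2 * K + 1 by ring, ← Int.cast_natCast,
          Int.toNat_of_nonneg (by omega)]
        push_cast; ring
    _ ≤ 2 * x / m + 1 := by
        have := Int.floor_le (x / m)
        rw [mul_div_assoc]; linarith

lemma exists_mem_divisorsAntidiagonal_of_dvd_mul {q : ℕ} (hq : q ≠ 0) {a b : ℤ}
    (h : (q : ℤ) ∣ a * b) : ∃ p ∈ q.divisorsAntidiagonal, (p.1 : ℤ) ∣ a ∧ (p.2 : ℤ) ∣ b := by
  obtain ⟨d, e, hd, he, hde⟩ := exists_dvd_and_dvd_of_dvd_mul h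
  refine ⟨(d.natAbs, e.natAbs), Nat.mem_divisorsAntidiagonal.mpr ⟨?_, hq⟩,
    Int.natAbs_dvd.mpr hd, Int.natAbs_dvd.mpr he⟩
  rw [← Int.natAbs_mul, ← hde, Int.natAbs_natCast]

lemma card_filter_dvd_mul_le {q : ℕ} (hq : q ≠ 0) (s t : Finset ℤ) :
    #{rr ∈ s ×ˢ t | (q : ℤ) ∣ rr.1 * rr.2} ≤
      ∑ p ∈ q.divisorsAntidiagonal, #{r ∈ s | (p.1 : ℤ) ∣ r} * #{r ∈ t | (p.2 : ℤ) ∣ r} := by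
  have hcover : {rr ∈ s ×ˢ t | (q : ℤ) ∣ rr.1 * rr.2} ⊆
      q.divisorsAntidiagonal.biUnion fun p =>
        {r ∈ s | (p.1 : ℤ) ∣ r} ×ˢ {r ∈ t | (p.2 : ℤ) ∣ r} := by
    intro rr hrr
    obtain ⟨hst, hdvd⟩ := mem_filter.mp hrr
    obtain ⟨hs, ht⟩ := mem_product.mp hst
    obtain ⟨p, hp, h1, h2⟩ := exists_mem_divisorsAntidiagonal_of_dvd_mul hq hdvd
    exact mem_biUnion.mpr
      ⟨p, hp, mem_product.mpr ⟨mem_filter.mpr ⟨hs, h1⟩, mem_filter.mpr ⟨ht, h2⟩⟩⟩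
  refine (card_le_card hcover).trans (card_biUnion_le.trans_eq ?_)
  exact sum_congr rfl fun _ _ => card_product _ _

lemma two_mul_div_add_one_mul_two_mul_div_add_one_le {d e x : ℝ} (hd : 1 ≤ d) (he : 1 ≤ e)
    (hx : 1 ≤ x) :
    (2 * x / d + 1) * (2 * x / e + 1) ≤ 4 * x ^ 2 / (d * e) + 5 * x := by
  have hd' : 2 * x / d ≤ 2 * x := div_le_self (by positivity) hd
  have he' : 2 * x / e ≤ 2 * x := div_le_self (by positivity) he
  have hprod : 2 * x / d * (2 * x / e) = 4 * x ^ 2 / (d * e) := by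
    rw [div_mul_div_comm]; ring
  nlinarith

lemma Nat.card_divisorsAntidiagonal (n : ℕ) : #n.divisorsAntidiagonal = #n.divisors := by
  rw [← Nat.map_div_right_divisors, card_map]

lemma card_filter_dvd_mul_card_filter_dvd_le {q : ℕ} {p : ℕ × ℕ} (hp : p ∈ q.divisorsAntidiagonal)
    {x : ℝ} (hx : 1 ≤ x) :
    (#{r ∈ Ioo ⌊-x⌋ ⌈x⌉ | (p.1 : ℤ) ∣ r} * #{r ∈ Ioo ⌊-x⌋ ⌈x⌉ | (p.2 : ℤ) ∣ r} : ℝ) ≤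
      4 * x ^ 2 / q + 5 * x := by
  have h1 : 0 < p.1 := Nat.pos_of_mem_divisors (Nat.fst_mem_divisors_of_mem_antidiagonal hp)
  have h2 : 0 < p.2 := Nat.pos_of_mem_divisors (Nat.snd_mem_divisors_of_mem_antidiagonal hp)
  have hq : (q : ℝ) = p.1 * p.2 := by exact_mod_cast (Nat.mem_divisorsAntidiagonal.mp hp).1.symm
  calc _ ≤ (2 * x / p.1 + 1) * (2 * x / p.2 + 1) := by
        gcongr <;> exact_mod_cast card_filter_dvd_Ioo_floor_neg_ceil_le (by omega) (by linarith)
    _ ≤ _ := hq ▸ two_mul_div_add_one_mul_two_mul_div_add_one_le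
        (by exact_mod_cast h1) (by exact_mod_cast h2) hx

theorem divisor_pair_count_bound :
    ∃ C : ℝ, 0 < C ∧ ∀ q : ℕ, 1 ≤ q → ∀ x : ℝ, 2 ≤ x →
      ((((Finset.Ioo (⌊-x⌋ : ℤ) ⌈x⌉) ×ˢ (Finset.Ioo (⌊-x⌋ : ℤ) ⌈x⌉)).filter
          (fun rr : ℤ × ℤ => rr.1 * rr.2 ≠ 0 ∧ (q : ℤ) ∣ rr.1 * rr.2)).card : ℝ)
        ≤ C * ((q.divisors.card : ℝ) * x ^ 2 / q + (q.divisors.card : ℝ) * x) := by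
  refine ⟨5, by norm_num, fun q hq x hx => ?_⟩
  set I := Ioo ⌊-x⌋ ⌈x⌉
  have hdrop : {rr ∈ I ×ˢ I | rr.1 * rr.2 ≠ 0 ∧ (q : ℤ) ∣ rr.1 * rr.2} ⊆
      {rr ∈ I ×ˢ I | (q : ℤ) ∣ rr.1 * rr.2} := monotone_filter_right _ fun _ _ h => h.2
  calc _ ≤ (#{rr ∈ I ×ˢ I | (q : ℤ) ∣ rr.1 * rr.2} : ℝ) := by exact_mod_cast card_le_card hdrop
    _ ≤ ∑ p ∈ q.divisorsAntidiagonal,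
          (#{r ∈ I | (p.1 : ℤ) ∣ r} * #{r ∈ I | (p.2 : ℤ) ∣ r} : ℝ) := by
        exact_mod_cast card_filter_dvd_mul_le (by omega) I I
    _ ≤ #q.divisors * (4 * x ^ 2 / q + 5 * x) := by
        rw [← Nat.card_divisorsAntidiagonal, ← nsmul_eq_mul, ← sum_const]
        exact sum_le_sum fun p hp => card_filter_dvd_mul_card_filter_dvd_le hp (by linarith)
    _ = 4 * (#q.divisors * x ^ 2 / q) + 5 * (#q.divisors * x) := by ring
    _ ≤ _ := by
        have : 0 ≤ (#q.divisors : ℝ) * x ^ 2 / q := by positivity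
        linarith
end
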